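/- arXiv:2503.14252 — 2 statements merged into one kernel-verified Lean document; each statement's English description precedes it below -/
import Mathlib

section
/- The derivative of L(f) = (E - e·sin E)/(1-e²)^{3/2}, where E is expressed through f via the Kepler relations sin f = √(1-e²)·sin E/(1 - e·cos E) and cos f = (cos E - e)/(1 - e·cos E), satisfies L'(f) = 1/ρ(f)², i.e., L is an antiderivative of 1/(1 + e·cos f)². -/
theorem stmt1 (e : ℝ) (he0 : 0 ≤ e) (he1 : e < 1) (ρ E : ℝ → ℝ)
    (hρ : ∀ f, ρ f = 1 + e * Real.cos f)
    (hE : Differentiable ℝ E)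
    (hcos : ∀ f, Real.cos (E f) = (Real.cos f + e) / ρ f)
    (hsin : ∀ f, Real.sin (E f) = Real.sqrt (1 - e ^ 2) * Real.sin f / ρ f) :
    ∀ f, deriv (fun s => (E s - e * Real.sin (E s)) / (1 - e ^ 2) ^ ((3 : ℝ) / 2)) f
      = 1 / (ρ f) ^ 2 := by
  have h1e : (0:ℝ) < 1 - e ^ 2 := by nlinarith
  set s := Real.sqrt (1 - e ^ 2) with hs_def
  have hs_pos : 0 < s := Real.sqrt_pos.mpr h1e
  have hs_sq : s ^ 2 = 1 - e ^ 2 := Real.sq_sqrt h1e.le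
  have hρpos : ∀ f, 0 < 1 + e * Real.cos f := by
    intro f; nlinarith [Real.neg_one_le_cos f, Real.cos_le_one f]
  have hE' : ∀ f, HasDerivAt E (s / (1 + e * Real.cos f)) f := by
    intro f
    have hD : HasDerivAt E (deriv E f) f := (hE f).hasDerivAt
    suffices h : deriv E f = s / (1 + e * Real.cos f) by rw [← h]; exact hD
    have hρf := hρpos f
    have hpyf := Real.sin_sq_add_cos_sq f
    by_cases hc : Real.cos f + e ≠ 0
    · have h1 : HasDerivAt (fun x => Real.sin (E x)) (Real.cos (E f) * deriv E f) f := hD.sin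
      have h2 := HasDerivAt.div ((Real.hasDerivAt_sin f).const_mul s)
        (((Real.hasDerivAt_cos f).const_mul e).const_add 1) (ne_of_gt hρf)
      have heq : (fun x => Real.sin (E x)) = fun x => s * Real.sin x / (1 + e * Real.cos x) := by
        funext x; rw [hsin x, hρ x]
      rw [heq] at h1
      have h12 := h1.unique h2
      rw [hcos f, hρ f] at h12
      field_simp at h12
      rw [eq_div_iff (ne_of_gt hρf)]
      have key : (Real.cos f + e) * (deriv E f * (1 + e * Real.cos f)) * (1 + e * Real.cos f)
          = (Real.cos f + e) * s * (1 + e * Real.cos f) := by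
        have hρ' : 1 + Real.cos f * e ≠ 0 := by nlinarith
        rw [div_eq_div_iff hρ' (pow_ne_zero 2 hρ')] at h12
        linear_combination h12 + s * e * (1 + e * Real.cos f) * hpyf
      exact mul_left_cancel₀ hc (mul_right_cancel₀ (ne_of_gt hρf) key)
    · push_neg at hc
      have hcf : Real.cos f = -e := by linarith
      have hsf : Real.sin f ≠ 0 := by
        intro h0; rw [h0, hcf] at hpyf; nlinarith
      have h1 : HasDerivAt (fun x => Real.cos (E x)) (-Real.sin (E f) * deriv E f) f := hD.cos
      have h2 := HasDerivAt.div ((Real.hasDerivAt_cos f).add_const e)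
        (((Real.hasDerivAt_cos f).const_mul e).const_add 1) (ne_of_gt hρf)
      have heq : (fun x => Real.cos (E x)) = fun x => (Real.cos x + e) / (1 + e * Real.cos x) := by
        funext x; rw [hcos x, hρ x]
      rw [heq] at h1
      have h12 := h1.unique h2
      rw [hsin f, hρ f] at h12
      field_simp at h12
      rw [eq_div_iff (ne_of_gt hρf)]
      have key : Real.sin f * (s * (deriv E f * (1 + e * Real.cos f))) * (1 + e * Real.cos f)
          = Real.sin f * (s * s) * (1 + e * Real.cos f) := by
        linear_combination -(Real.sin f * (1 + e * Real.cos f)) * h12 - Real.sin f * (1 + e * Real.cos f) * hs_sq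
      have h3 := mul_left_cancel₀ hsf (mul_right_cancel₀ (ne_of_gt hρf) key)
      exact mul_left_cancel₀ (ne_of_gt hs_pos) h3
  intro f
  have hρf := hρpos f
  have hL : HasDerivAt (fun x => (E x - e * Real.sin (E x)) / (1 - e ^ 2) ^ ((3 : ℝ) / 2))
      ((s / (1 + e * Real.cos f) - e * (Real.cos (E f) * (s / (1 + e * Real.cos f))))
        / (1 - e ^ 2) ^ ((3 : ℝ) / 2)) f :=
    ((hE' f).sub (((hE' f).sin).const_mul e)).div_const _
  rw [hL.deriv, hcos f, hρ f]
  have hc32 : (1 - e ^ 2) ^ ((3 : ℝ) / 2) = (1 - e ^ 2) * s := by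
    rw [show (3:ℝ)/2 = 1 + 1/2 by norm_num, Real.rpow_add h1e, Real.rpow_one,
      hs_def, Real.sqrt_eq_rpow]
  rw [hc32]
  rw [div_eq_div_iff (by positivity) (by positivity)]
  field_simp
  ring
end

section
/- Let E : ℝ → ℝ be defined by E(f) = atan2(√(1-e²)·sin f / ρ(f), (cos f + e)/ρ(f)) + f - atan2(sin f, cos f), where ρ(f) = 1 + e·cos f and 0 ≤ e < 1. Then cos(E(f)) = (cos f + e)/ρ(f) and sin(E(f)) = √(1-e²)·sin f/ρ(f). -/
noncomputable def atan2 (y x : ℝ) : ℝ := Complex.arg (x + y * Complex.I)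

lemma atan2_cos_sin (x y : ℝ) (h : x ^ 2 + y ^ 2 = 1) :
    Real.cos (atan2 y x) = x ∧ Real.sin (atan2 y x) = y := by
  set z : ℂ := (x : ℂ) + (y : ℂ) * Complex.I with hz
  have habs : ‖z‖ = 1 := by
    have h1 : ‖z‖ ^ 2 = 1 := by
      rw [Complex.sq_norm, Complex.normSq_apply]
      simp [hz]
      nlinarith
    nlinarith [norm_nonneg z]
  have hz0 : z ≠ 0 := by
    intro h0; rw [h0] at habs; simp at habs
  constructor
  · rw [atan2, Complex.cos_arg hz0]
    rw [habs]
    simp [hz, habs]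
  · rw [atan2, Complex.sin_arg]
    rw [← hz, habs]
    simp [hz, habs]

theorem stmt18 (e : ℝ) (he0 : 0 ≤ e) (he1 : e < 1) (ρ E : ℝ → ℝ)
    (hρ : ∀ f, ρ f = 1 + e * Real.cos f)
    (hE : ∀ f, E f = atan2 (Real.sqrt (1 - e ^ 2) * Real.sin f / ρ f) ((Real.cos f + e) / ρ f)
        + f - atan2 (Real.sin f) (Real.cos f)) :
    ∀ f, Real.cos (E f) = (Real.cos f + e) / ρ f ∧
         Real.sin (E f) = Real.sqrt (1 - e ^ 2) * Real.sin f / ρ f := by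
  intro f
  have hc := Real.neg_one_le_cos f
  have hρpos : 0 < ρ f := by rw [hρ]; nlinarith
  have hsq : Real.sqrt (1 - e ^ 2) ^ 2 = 1 - e ^ 2 :=
    Real.sq_sqrt (by nlinarith)
  have hone : ((Real.cos f + e) / ρ f) ^ 2 +
      (Real.sqrt (1 - e ^ 2) * Real.sin f / ρ f) ^ 2 = 1 := by
    have hpyth := Real.sin_sq_add_cos_sq f
    field_simp
    rw [hρ] at *
    nlinarith
  obtain ⟨hcos1, hsin1⟩ := atan2_cos_sin _ _ hone
  obtain ⟨hcos2, hsin2⟩ := atan2_cos_sin (Real.cos f) (Real.sin f)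
    (by nlinarith [Real.sin_sq_add_cos_sq f])
  -- f - atan2 (sin f) (cos f) is a multiple of 2π
  have h1 : Real.cos (f - atan2 (Real.sin f) (Real.cos f)) = 1 := by
    rw [Real.cos_sub, hcos2, hsin2]
    nlinarith [Real.sin_sq_add_cos_sq f]
  obtain ⟨n, hn⟩ := (Real.cos_eq_one_iff _).1 h1
  have hEf : E f = atan2 (Real.sqrt (1 - e ^ 2) * Real.sin f / ρ f)
      ((Real.cos f + e) / ρ f) + (n : ℝ) * (2 * Real.pi) := by
    rw [hE, hn]; ring
  constructor
  · rw [hEf, Real.cos_add_int_mul_two_pi, hcos1]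
  · rw [hEf, Real.sin_add_int_mul_two_pi, hsin1]
end
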